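/- Let m, k be integers with m ≥ 5 and 2 ≤ k ≤ ⌊(m-1)/2⌋, let S be a nonempty subset of {1,...,k}, and let f_{(m,k)} be the associated function on 𝔽_3^m. Then every nonzero codeword of the code C_{f_{(m,k)}} has Hamming weight at least Σ_{j=1}^{k} 2^j·C(m, j), and the codeword c_{1,0} (u = 1, v = 0) has Hamming weight exactly Σ_{j=1}^{k} 2^j·C(m, j); that is, the minimum distance of C_{f_{(m,k)}} equals Σ_{j=1}^{k} 2^j·C(m, j). -/

import Mathlib

/-! The support of `f_{(m,k)}` is the set of vectors of weight `1, …, k`, which has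
`W = ∑_{j=1}^k 2^j C(m,j)` elements, so `c_{u,0}` has weight `W` for `u ≠ 0`. For `v ≠ 0` the
linear form `x ↦ v·x` has weight `2·3^(m-1)`, and the triangle inequality for the Hamming
distance gives `wt(c_{u,v}) ≥ 2·3^(m-1) - W`. This is at least `W` because `3W ≤ 3^m` when
`2k < m`: in the expansion `3^m = ∑_j 2^j C(m,j)`, the term `m - j` is at least twice the term `j`
for `j ≤ k`. -/

open Finset

/-- The function `f_{(m,k)} : 𝔽_3^m → 𝔽_3` attached to a subset `S ⊆ {1,…,k}`:
`-1` if `wt(x) ∈ S`, `1` if `wt(x) ∈ {1,…,k} \ S`, `0` otherwise. -/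
def fmk {m : ℕ} (k : ℕ) (S : Finset ℕ) (x : Fin m → ZMod 3) : ZMod 3 :=
  if hammingNorm x ∈ S then -1
  else if hammingNorm x ∈ Finset.Icc 1 k then 1
  else 0

/-- The Hamming weight of the codeword `c_{u,v}` of the code `C_h`, i.e. the number
of `x ∈ 𝔽_3^m \ {0}` with `u·h(x) + v·x ≠ 0`. -/
def cwWeight {m : ℕ} (h : (Fin m → ZMod 3) → ZMod 3)
    (u : ZMod 3) (v : Fin m → ZMod 3) : ℕ :=
  (Finset.univ.filter fun x : Fin m → ZMod 3 =>
    x ≠ 0 ∧ u * h x + ∑ j, v j * x j ≠ 0).card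

section HammingCount

variable {ι β : Type*} [Fintype ι] [DecidableEq ι] [Fintype β] [DecidableEq β] [Zero β]

lemma card_filter_support_eq (s : Finset ι) :
    #{x : ι → β | ({i | x i ≠ 0} : Finset ι) = s} = (Fintype.card β - 1) ^ #s := by
  have : ({x : ι → β | ({i | x i ≠ 0} : Finset ι) = s} : Finset _) =
      Fintype.piFinset fun i => if i ∈ s then univ.erase 0 else {0} := by
    ext x
    simp only [mem_filter, mem_univ, true_and, Fintype.mem_piFinset, Finset.ext_iff]
    refine forall_congr' fun i => ?_
    split_ifs with hi <;> simp [hi]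
  rw [this, Fintype.card_piFinset]
  simp [apply_ite Finset.card, prod_ite_mem, card_univ]

lemma card_filter_hammingNorm_eq (j : ℕ) :
    #{x : ι → β | hammingNorm x = j} =
      (Fintype.card β - 1) ^ j * (Fintype.card ι).choose j := by
  rw [card_eq_sum_card_fiberwise (f := fun x => ({i | x i ≠ 0} : Finset ι))
    (t := powersetCard j univ) fun x hx => by simpa [mem_powersetCard, hammingNorm] using hx]
  rw [sum_congr rfl fun s hs => ?_, sum_const, card_powersetCard, card_univ, smul_eq_mul,
    mul_comm]
  rw [mem_powersetCard] at hs
  rw [filter_filter, ← hs.2, ← card_filter_support_eq s]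
  congr 1
  ext x
  simp only [mem_filter, mem_univ, true_and, and_iff_right_iff_imp]
  rintro rfl
  rfl

lemma card_filter_hammingNorm_mem (t : Finset ℕ) :
    #{x : ι → β | hammingNorm x ∈ t} =
      ∑ j ∈ t, (Fintype.card β - 1) ^ j * (Fintype.card ι).choose j := by
  rw [← sum_card_fiberwise_eq_card_filter]
  exact sum_congr rfl fun j _ => card_filter_hammingNorm_eq j

end HammingCount

lemma hammingNorm_sub_le_hammingNorm_add {ι β : Type*} [Fintype ι] [AddGroup β] [DecidableEq β]
    (x y : ι → β) :
    hammingNorm y - hammingNorm x ≤ hammingNorm (x + y) := by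
  have h := hammingDist_triangle x 0 (x + y)
  rw [hammingDist_zero_right, hammingDist_zero_left, hammingDist_eq_hammingNorm,
    neg_add_cancel_left] at h
  omega

section LinearForm

variable {F ι : Type*} [DivisionRing F] [Fintype F] [DecidableEq F] [Fintype ι] [DecidableEq ι]

lemma card_filter_sum_mul_eq_zero_mul_card {v : ι → F} (hv : v ≠ 0) :
    #{x : ι → F | ∑ j, v j * x j = 0} * Fintype.card F = Fintype.card F ^ Fintype.card ι := by
  let φ : (ι → F) →+ F := AddMonoidHom.mk' (fun x => ∑ j, v j * x j) fun x y => by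
    simp [mul_add, sum_add_distrib]
  obtain ⟨i, hi⟩ : ∃ i, v i ≠ 0 := Function.ne_iff.mp hv
  have hφ : Function.Surjective φ := fun c =>
    ⟨Pi.single i ((v i)⁻¹ * c), by simp [φ, Pi.single_apply, mul_inv_cancel_left₀ hi]⟩
  have h := φ.ker.card_mul_index
  rw [AddSubgroup.index_ker, AddMonoidHom.range_eq_top.mpr hφ, AddSubgroup.card_top] at h
  simp only [Nat.card_eq_fintype_card, Fintype.card_fun] at h
  rw [← h, ← Fintype.card_subtype]
  congr 1
  exact Fintype.card_congr' rfl

lemma hammingNorm_sum_mul_mul_card {v : ι → F} (hv : v ≠ 0) :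
    hammingNorm (fun x : ι → F => ∑ j, v j * x j) * Fintype.card F =
      (Fintype.card F - 1) * Fintype.card F ^ Fintype.card ι := by
  have h := card_filter_add_card_filter_not (s := univ) fun x : ι → F => ∑ j, v j * x j = 0
  rw [card_univ, Fintype.card_fun] at h
  have hK := card_filter_sum_mul_eq_zero_mul_card hv
  rw [Nat.sub_mul, one_mul]
  refine Nat.eq_sub_of_add_eq ?_
  change #{x : ι → F | ¬∑ j, v j * x j = 0} * _ + _ = _
  linear_combination (Fintype.card F) * h - hK

end LinearForm

lemma three_mul_sum_Icc_two_pow_mul_choose_le {m k : ℕ} (hkm : 2 * k < m) :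
    3 * ∑ j ∈ Icc 1 k, 2 ^ j * m.choose j ≤ 3 ^ m := by
  have hreflect : ∑ j ∈ Icc 1 k, 2 ^ (m - j) * m.choose j =
      ∑ j ∈ Icc (m - k) (m - 1), 2 ^ j * m.choose j := by
    refine sum_nbij' (m - ·) (m - ·) ?_ ?_ ?_ ?_ ?_ <;> intro j hj <;>
      simp only [mem_Icc] at hj ⊢
    · omega
    · omega
    · omega
    · omega
    · rw [Nat.choose_symm (by omega)]
  have hdisj : Disjoint (Icc 1 k) (Icc (m - k) (m - 1)) :=
    disjoint_left.mpr fun j h₁ h₂ => by simp only [mem_Icc] at h₁ h₂; omega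
  calc 3 * ∑ j ∈ Icc 1 k, 2 ^ j * m.choose j
      = ∑ j ∈ Icc 1 k, 2 ^ j * m.choose j + ∑ j ∈ Icc 1 k, 2 * 2 ^ j * m.choose j := by
        simp only [mul_assoc, ← mul_sum]; ring
    _ ≤ ∑ j ∈ Icc 1 k, 2 ^ j * m.choose j + ∑ j ∈ Icc 1 k, 2 ^ (m - j) * m.choose j := by
        gcongr with j hj
        rw [← pow_succ']
        exact Nat.pow_le_pow_right two_pos (by simp only [mem_Icc] at hj; omega)
    _ = ∑ j ∈ Icc 1 k ∪ Icc (m - k) (m - 1), 2 ^ j * m.choose j := by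
        rw [hreflect, sum_union hdisj]
    _ ≤ ∑ j ∈ range (m + 1), 2 ^ j * m.choose j :=
        sum_le_sum_of_subset fun j hj => by
          simp only [mem_union, mem_Icc, mem_range] at hj ⊢; omega
    _ = 3 ^ m := by simpa using (add_pow (2 : ℕ) 1 m).symm

section fmk

variable {m k : ℕ} {S : Finset ℕ}

lemma fmk_ne_zero_iff (hSsub : S ⊆ Icc 1 k) (x : Fin m → ZMod 3) :
    fmk k S x ≠ 0 ↔ hammingNorm x ∈ Icc 1 k := by
  unfold fmk
  by_cases hS : hammingNorm x ∈ S
  · simp [hS, hSsub hS]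
  · split_ifs with hIcc <;> simp [hIcc]

lemma hammingNorm_fmk (hSsub : S ⊆ Icc 1 k) :
    hammingNorm (fmk (m := m) k S) = ∑ j ∈ Icc 1 k, 2 ^ j * m.choose j := by
  simp_rw [hammingNorm, fmk_ne_zero_iff hSsub, card_filter_hammingNorm_mem, ZMod.card,
    Fintype.card_fin]

end fmk

lemma cwWeight_eq_hammingNorm {m : ℕ} {h : (Fin m → ZMod 3) → ZMod 3} (h0 : h 0 = 0)
    (u : ZMod 3) (v : Fin m → ZMod 3) :
    cwWeight h u v = hammingNorm fun x => u * h x + ∑ j, v j * x j := by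
  unfold cwWeight hammingNorm
  congr 1
  ext x
  simp only [mem_filter, mem_univ, true_and, and_iff_right_iff_imp]
  rintro hx rfl
  simp [h0] at hx

theorem stmt_10 (m k : ℕ) (hk2 : 2 ≤ k) (hk : k ≤ (m - 1) / 2)
    (S : Finset ℕ) (hSsub : S ⊆ Finset.Icc 1 k) :
    (∀ (u : ZMod 3) (v : Fin m → ZMod 3),
      (∃ x : Fin m → ZMod 3, x ≠ 0 ∧ u * fmk k S x + ∑ j, v j * x j ≠ 0) →
      ∑ j ∈ Finset.Icc 1 k, 2 ^ j * m.choose j ≤ cwWeight (fmk k S) u v)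
    ∧ cwWeight (fmk (m := m) k S) 1 0 = ∑ j ∈ Finset.Icc 1 k, 2 ^ j * m.choose j := by
  set W := ∑ j ∈ Icc 1 k, 2 ^ j * m.choose j
  have hf : hammingNorm (fmk (m := m) k S) = W := hammingNorm_fmk hSsub
  have hf0 : fmk (m := m) k S 0 = 0 := by
    by_contra h
    simpa using (fmk_ne_zero_iff hSsub 0).mp h
  have hW : 3 * W ≤ 3 ^ m := three_mul_sum_Icc_two_pow_mul_choose_le (by omega)
  refine ⟨fun u v ⟨x, _, hx⟩ => ?_, ?_⟩
  · rw [cwWeight_eq_hammingNorm hf0]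
    rcases eq_or_ne v 0 with rfl | hv
    · have hu : u ≠ 0 := by rintro rfl; simp at hx
      simp only [Pi.zero_apply, zero_mul, sum_const_zero, add_zero]
      change W ≤ hammingNorm (u • fmk k S)
      rw [hammingNorm_smul fun _ => .of_ne_zero hu, hf]
    · have hL := hammingNorm_sum_mul_mul_card hv
      have hsmul : hammingNorm (u • fmk k S) ≤ W := hf ▸ hammingNorm_smul_le_hammingNorm
      rw [ZMod.card, Fintype.card_fin] at hL
      calc W ≤ hammingNorm (fun x : Fin m → ZMod 3 => ∑ j, v j * x j)
            - hammingNorm (u • fmk k S) := by omega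
        _ ≤ _ := hammingNorm_sub_le_hammingNorm_add (u • fmk k S) _
  · rw [cwWeight_eq_hammingNorm hf0]
    simpa using hf
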